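/- arXiv:2603.09008 — 3 statements merged into one kernel-verified Lean document; each statement's English description precedes it below -/
import Mathlib

section
/- Let n ≥ 1 and r ≥ 1 be integers. Let F^r_n be the number of fixed points of the random permutation of [n] obtained by performing r iterated random-to-top shuffles starting from the identity. Let π be a uniformly random permutation of [n] and let K^r_n be the number of distinct values among r i.i.d. uniform samples from [n], with π independent of K^r_n. Then F^r_n is equal in distribution to n − max_{1 ≤ i ≤ K^r_n} π(i) + Σ_{i=1}^{K^r_n} 1(π(i) = i). -/
open MeasureTheory ProbabilityTheory Filter Finset Topology
open scoped NNReal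

/-- Move card `c` to the top (position `0`) of the deck `π`
(where `π i` is the card in position `i`). -/
def moveToTop {n : ℕ} (c : Fin n) (π : Equiv.Perm (Fin n)) : Equiv.Perm (Fin n) :=
  π * ((π⁻¹ c).cycleRange)⁻¹

/-- The permutation (position `i` ↦ card in position `i`) obtained after performing
iterated random-to-top moves with selected cards `s 0, s 1, …`, starting from the
identity deck `(1, 2, …, n)`. -/
def rttPerm (n r : ℕ) (s : Fin r → Fin n) : Equiv.Perm (Fin n) :=
  (List.ofFn s).foldl (fun π c => moveToTop c π) 1

/-- Number of fixed points of a permutation. -/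
def fixedPointCount {n : ℕ} (π : Equiv.Perm (Fin n)) : ℕ :=
  (Finset.univ.filter fun i => π i = i).card

/-- Number of descents of a permutation. -/
def descentCount {n : ℕ} (π : Equiv.Perm (Fin n)) : ℕ :=
  (Finset.univ.filter fun p : Fin n × Fin n =>
    (p.1 : ℕ) + 1 = (p.2 : ℕ) ∧ π p.2 < π p.1).card

/-- Number of inversions of a permutation. -/
def inversionCount {n : ℕ} (π : Equiv.Perm (Fin n)) : ℕ :=
  (Finset.univ.filter fun p : Fin n × Fin n => p.1 < p.2 ∧ π p.2 < π p.1).card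

/-- The number of distinct values among `s 0, …, s (r-1)` (the occupancy count `K^r_n`). -/
def distinctCount (n r : ℕ) (s : Fin r → Fin n) : ℕ :=
  (Finset.univ.image s).card

/-- Probability of the event `p` under the uniform distribution on the finite type `α`. -/
noncomputable def unifProb {α : Type*} [Fintype α] (p : α → Prop) : ℝ :=
  (Nat.card {x : α // p x} : ℝ) / (Fintype.card α : ℝ)

/-- Expectation of `f` under the uniform distribution on the finite type `α`. -/
noncomputable def unifExpect {α : Type*} [Fintype α] (f : α → ℝ) : ℝ :=
  (∑ x, f x) / (Fintype.card α : ℝ)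

/-- Variance of `f` under the uniform distribution on the finite type `α`. -/
noncomputable def unifVar {α : Type*} [Fintype α] (f : α → ℝ) : ℝ :=
  unifExpect fun x => (f x - unifExpect f) ^ 2

/-- `max_{1 ≤ i ≤ k} π(i)`: the maximum card value (in `{1, …, n}`, i.e. `val + 1`)
among the first `k` positions of `π`. -/
def maxFirst (n k : ℕ) (π : Equiv.Perm (Fin n)) : ℕ :=
  (Finset.univ.filter fun i : Fin n => (i : ℕ) < k).sup fun i => (π i : ℕ) + 1

/-- The number of fixed points among the first `k` positions of `π`. -/
def fixedFirst (n k : ℕ) (π : Equiv.Perm (Fin n)) : ℕ :=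
  (Finset.univ.filter fun i : Fin n => (i : ℕ) < k ∧ π i = i).card

/-!
After the moves `s`, the deck lists the distinct selected cards, most recently selected first,
followed by the never-selected cards in increasing order, so `Π` is increasing on the positions
`> K`. For any permutation increasing on the positions `> k`, the fixed points among these are
exactly the positions `> max_{i ≤ k} π(i)`, whence `F = n - max_{i ≤ K} Π(i) + #{i ≤ K : Π(i) = i}`.
Relabelling the cards by an independent uniform `σ` leaves the law of `s` unchanged and replaces
the top `K` cards of the deck by those of `σ Π`, which is uniform and independent of `s`.
-/

theorem List.ofFn_comp_succAbove {α : Type*} {N : ℕ} (f : Fin (N + 1) → α) (j : Fin (N + 1)) :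
    List.ofFn (f ∘ j.succAbove) = (List.ofFn f).eraseIdx j := by
  refine List.ext_getElem (by simp [List.length_eraseIdx, j.is_le]) fun i h₁ h₂ => ?_
  simp only [List.getElem_ofFn, List.getElem_eraseIdx, Function.comp_apply, Fin.succAbove,
    Fin.lt_def, Fin.val_castSucc]
  split_ifs <;> rfl

theorem List.dedup_concat {α : Type*} [DecidableEq α] (l : List α) (c : α) :
    (l ++ [c]).dedup = l.dedup.erase c ++ [c] := by
  induction l with
  | nil => simp
  | cons a l ih =>
    by_cases ha : a ∈ l
    · simp [List.dedup_cons_of_mem, ha, ih]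
    by_cases hac : a = c
    · subst hac
      simp [List.dedup_cons_of_mem, List.dedup_cons_of_notMem, ha, ih, List.erase_of_not_mem]
    · simp [List.dedup_cons_of_notMem, ha, hac, ih, List.erase_cons_tail]

theorem List.Nodup.reverse_erase {α : Type*} [DecidableEq α] {l : List α} (hl : l.Nodup)
    (a : α) : (l.erase a).reverse = l.reverse.erase a := by
  rw [hl.erase_eq_filter, (List.nodup_reverse.2 hl).erase_eq_filter, List.filter_reverse]

theorem Finset.sort_erase {α : Type*} [LinearOrder α] (s : Finset α) (a : α) :
    (s.erase a).sort (· ≤ ·) = (s.sort (· ≤ ·)).erase a := by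
  refine List.Perm.eq_of_pairwise' (Finset.pairwise_sort _ _)
    ((Finset.pairwise_sort s _).sublist List.erase_sublist) ?_
  rw [← Multiset.coe_eq_coe, ← Multiset.coe_erase, Finset.sort_eq, Finset.sort_eq,
    Finset.erase_val]

theorem Equiv.Perm.exists_mem_apply_eq_of_mapsTo {α : Type*} {σ : Equiv.Perm α} {s : Finset α}
    (h : ∀ x ∈ s, σ x ∈ s) {y : α} (hy : y ∈ s) : ∃ x ∈ s, σ x = y := by
  have hs : s.map σ.toEmbedding = s := Finset.map_eq_of_subset fun y hy => by
    obtain ⟨x, hx, rfl⟩ := Finset.mem_map.1 hy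
    exact h x hx
  obtain ⟨x, hx, hxy⟩ := Finset.mem_map.1 (hs.symm ▸ hy)
  exact ⟨x, hx, hxy⟩

theorem Fin.card_filter_le_val {n m : ℕ} : #{i : Fin n | m ≤ (i : ℕ)} = n - m := by
  have := card_filter_add_card_filter_not (s := (univ : Finset (Fin n))) fun i => (i : ℕ) < m
  simp only [not_lt, Fin.card_filter_val_lt, card_univ, Fintype.card_fin] at this
  omega

section maxFirst

variable {n k : ℕ} {π : Equiv.Perm (Fin n)}

theorem apply_lt_maxFirst {i : Fin n} (hi : (i : ℕ) < k) : (π i : ℕ) < maxFirst n k π :=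
  Finset.le_sup (f := fun i : Fin n => (π i : ℕ) + 1) (by simpa using hi)

theorem maxFirst_le : maxFirst n k π ≤ n :=
  Finset.sup_le fun i _ => (π i).2

theorem exists_apply_add_one_eq_maxFirst (h : 0 < maxFirst n k π) :
    ∃ x : Fin n, (x : ℕ) < k ∧ (π x : ℕ) + 1 = maxFirst n k π := by
  have hne : (univ.filter fun i : Fin n => (i : ℕ) < k).Nonempty := by
    by_contra hemp
    simp [maxFirst, Finset.not_nonempty_iff_eq_empty.1 hemp] at h
  obtain ⟨x, hx, hmax⟩ := Finset.exists_mem_eq_sup _ hne fun i => (π i : ℕ) + 1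
  exact ⟨x, by simpa using hx, hmax.symm⟩

theorem le_maxFirst (hk : k ≤ n) : k ≤ maxFirst n k π := by
  have hsub : (univ.filter fun i : Fin n => (i : ℕ) < k).map π.toEmbedding ⊆
      univ.filter fun v : Fin n => (v : ℕ) < maxFirst n k π := by
    intro v hv
    obtain ⟨i, hi, rfl⟩ := Finset.mem_map.1 hv
    simpa using apply_lt_maxFirst (by simpa using hi)
  have := card_le_card hsub
  rwa [card_map, Fin.card_filter_val_lt, Fin.card_filter_val_lt, min_eq_right hk,
    min_eq_right maxFirst_le] at this

theorem apply_le_self_of_strictMonoOn (hπ : StrictMonoOn π {i | k ≤ (i : ℕ)}) {i : Fin n}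
    (hi : k ≤ (i : ℕ)) : π i ≤ i := by
  have hsub : (Ici i).map π.toEmbedding ⊆ Ici (π i) := by
    intro v hv
    obtain ⟨j, hj, rfl⟩ := Finset.mem_map.1 hv
    rw [mem_Ici] at hj ⊢
    exact hπ.monotoneOn hi (le_trans hi hj) hj
  have := card_le_card hsub
  rw [card_map, Fin.card_Ici, Fin.card_Ici] at this
  rw [Fin.le_def]
  omega

theorem apply_lt_maxFirst_or_apply_le_self (hπ : StrictMonoOn π {i | k ≤ (i : ℕ)}) (i : Fin n) :
    (π i : ℕ) < maxFirst n k π ∨ π i ≤ i := by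
  by_cases hi : (i : ℕ) < k
  · exact Or.inl (apply_lt_maxFirst hi)
  · exact Or.inr (apply_le_self_of_strictMonoOn hπ (not_lt.1 hi))

/-- Positions below `i` carry values below `i`, so by counting they carry all of them. -/
theorem apply_eq_self_of_maxFirst_le (hπ : StrictMonoOn π {i | k ≤ (i : ℕ)}) {i : Fin n}
    (hi : maxFirst n k π ≤ i) : π i = i := by
  have hmaps : ∀ j ∈ Iio i, π j ∈ Iio i := by
    intro j hj
    rw [mem_Iio, Fin.lt_def] at hj ⊢
    rcases apply_lt_maxFirst_or_apply_le_self hπ j with h | h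
    · omega
    · rw [Fin.le_def] at h; omega
  refine le_antisymm ?_ (not_lt.1 fun hlt => ?_)
  · rcases apply_lt_maxFirst_or_apply_le_self hπ i with h | h
    · rw [Fin.le_def]; omega
    · exact h
  · obtain ⟨j, hj, hji⟩ := Equiv.Perm.exists_mem_apply_eq_of_mapsTo hmaps (mem_Iio.2 hlt)
    exact (mem_Iio.1 hj).ne (π.injective hji)

/-- A fixed point `i ≥ k` forces `π` to map positions `≥ i` onto the values `≥ i`, but the value
`maxFirst n k π - 1 ≥ i` sits at a position `< k`. -/
theorem apply_ne_self_of_lt_maxFirst (hπ : StrictMonoOn π {i | k ≤ (i : ℕ)}) {i : Fin n}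
    (hki : k ≤ (i : ℕ)) (hiM : (i : ℕ) < maxFirst n k π) : π i ≠ i := by
  intro hfix
  obtain ⟨x, hxk, hx⟩ := exists_apply_add_one_eq_maxFirst (k := k) (π := π) (by omega)
  have hmaps : ∀ j ∈ Ici i, π j ∈ Ici i := by
    intro j hj
    rw [Finset.mem_Ici] at hj ⊢
    calc i = π i := hfix.symm
      _ ≤ π j := hπ.monotoneOn hki (le_trans hki hj) hj
  have hxi : π x ∈ Ici i := by
    rw [Finset.mem_Ici, Fin.le_def]
    omega
  obtain ⟨j, hj, hjx⟩ := Equiv.Perm.exists_mem_apply_eq_of_mapsTo hmaps hxi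
  rw [π.injective hjx, Finset.mem_Ici, Fin.le_def] at hj
  omega

theorem fixedPointCount_eq_of_strictMonoOn (hk : k ≤ n) (hπ : StrictMonoOn π {i | k ≤ (i : ℕ)}) :
    fixedPointCount π = n - maxFirst n k π + fixedFirst n k π := by
  have hsplit : (univ.filter fun i : Fin n => π i = i) =
      (univ.filter fun i : Fin n => (i : ℕ) < k ∧ π i = i) ∪
        univ.filter fun i : Fin n => maxFirst n k π ≤ (i : ℕ) := by
    ext i
    simp only [mem_filter, mem_univ, true_and, mem_union]
    constructor
    · intro h
      rcases lt_or_ge (i : ℕ) k with hik | hki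
      · exact Or.inl ⟨hik, h⟩
      rcases lt_or_ge (i : ℕ) (maxFirst n k π) with hiM | hMi
      · exact absurd h (apply_ne_self_of_lt_maxFirst hπ hki hiM)
      · exact Or.inr hMi
    · rintro (⟨-, h⟩ | h)
      exacts [h, apply_eq_self_of_maxFirst_le hπ h]
  have hdisj : Disjoint (univ.filter fun i : Fin n => (i : ℕ) < k ∧ π i = i)
      (univ.filter fun i : Fin n => maxFirst n k π ≤ (i : ℕ)) :=
    disjoint_filter.2 fun i _ h1 h2 => by have := le_maxFirst (π := π) hk; omega
  rw [fixedPointCount, hsplit, card_union_of_disjoint hdisj, Fin.card_filter_le_val, fixedFirst,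
    add_comm]

theorem maxFirst_congr {π₁ π₂ : Equiv.Perm (Fin n)}
    (h : ∀ i : Fin n, (i : ℕ) < k → π₁ i = π₂ i) : maxFirst n k π₁ = maxFirst n k π₂ :=
  Finset.sup_congr rfl fun i hi => by rw [h i (by simpa using hi)]

theorem fixedFirst_congr {π₁ π₂ : Equiv.Perm (Fin n)}
    (h : ∀ i : Fin n, (i : ℕ) < k → π₁ i = π₂ i) : fixedFirst n k π₁ = fixedFirst n k π₂ := by
  unfold fixedFirst
  congr 1
  exact Finset.filter_congr fun i _ => and_congr_right fun hi => by rw [h i hi]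

end maxFirst

theorem ofFn_moveToTop {n : ℕ} (c : Fin n) (π : Equiv.Perm (Fin n)) :
    List.ofFn (moveToTop c π) = c :: (List.ofFn π).erase c := by
  obtain _ | N := n
  · exact c.elim0
  set j := π⁻¹ c
  have htail : (fun i => moveToTop c π i.succ) = π ∘ j.succAbove := by
    funext i
    simp [moveToTop, Equiv.Perm.inv_def, Fin.cycleRange_symm_succ, j]
  have hj : (List.ofFn π)[(j : ℕ)]'(by rw [List.length_ofFn]; exact j.is_lt) = c := by
    rw [List.getElem_ofFn]; exact π.apply_symm_apply c
  rw [List.ofFn_succ, htail, List.ofFn_comp_succAbove, ← hj,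
    (List.nodup_ofFn.2 π.injective).erase_getElem]
  simp [moveToTop, Equiv.Perm.inv_def, j]

/-- `List.dedup` keeps last occurrences, so `l.dedup.reverse` lists the moved cards from the most
recently moved one on; the cards never moved keep their original order below them. -/
def rttDeck {n : ℕ} (l : List (Fin n)) : List (Fin n) :=
  l.dedup.reverse ++ (univ \ l.toFinset).sort (· ≤ ·)

theorem rttDeck_nil (n : ℕ) : rttDeck ([] : List (Fin n)) = List.finRange n := by
  simp [rttDeck, Fin.sort_univ]

theorem rttDeck_concat {n : ℕ} (l : List (Fin n)) (c : Fin n) :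
    rttDeck (l ++ [c]) = c :: (rttDeck l).erase c := by
  set S := (univ \ l.toFinset).sort (· ≤ ·)
  have hcompl : univ \ (l ++ [c]).toFinset = (univ \ l.toFinset).erase c := by
    ext x; simp
  rw [rttDeck, List.dedup_concat, List.reverse_append, hcompl, Finset.sort_erase, rttDeck]
  by_cases hc : c ∈ l
  · have hcS : c ∉ S := by simp [S, hc]
    rw [List.erase_append_left S (by simpa using hc), List.erase_of_not_mem hcS,
      (List.nodup_dedup l).reverse_erase]
    rfl
  · have hcl : c ∉ l.dedup := by simpa using hc
    rw [List.erase_append_right S (by simpa using hc), List.erase_of_not_mem hcl]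
    rfl

theorem rttDeck_length {n : ℕ} (l : List (Fin n)) : (rttDeck l).length = n := by
  have h : l.dedup.length ≤ n := by
    simpa [← List.card_toFinset] using card_le_univ l.toFinset
  simp [rttDeck, card_sdiff_of_subset (subset_univ _), List.card_toFinset]
  omega

theorem ofFn_foldl_moveToTop {n : ℕ} (l : List (Fin n)) :
    List.ofFn ⇑(l.foldl (fun π c => moveToTop c π) (1 : Equiv.Perm (Fin n))) = rttDeck l := by
  induction l using List.reverseRecOn with
  | nil => rw [rttDeck_nil, List.foldl_nil, Equiv.Perm.coe_one, List.ofFn_id]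
  | append_singleton l c ih =>
    rw [List.foldl_concat, ofFn_moveToTop, ih, rttDeck_concat]

theorem rttPerm_apply {n r : ℕ} (s : Fin r → Fin n) (i : Fin n) :
    rttPerm n r s i = (rttDeck (List.ofFn s))[(i : ℕ)]'(by rw [rttDeck_length]; exact i.2) := by
  simp only [← ofFn_foldl_moveToTop, List.getElem_ofFn]
  rfl

theorem distinctCount_eq_length_dedup {n r : ℕ} (s : Fin r → Fin n) :
    distinctCount n r s = (List.ofFn s).dedup.length := by
  rw [distinctCount, ← List.card_toFinset]
  congr 1
  ext x
  simp [List.mem_ofFn, eq_comm]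

theorem rttPerm_strictMonoOn {n r : ℕ} (s : Fin r → Fin n) :
    StrictMonoOn (rttPerm n r s) {i | distinctCount n r s ≤ (i : ℕ)} := by
  intro i hi j hj hij
  have hK : distinctCount n r s = (List.ofFn s).dedup.reverse.length := by
    rw [distinctCount_eq_length_dedup, List.length_reverse]
  simp only [Set.mem_ofPred_eq, hK] at hi hj
  rw [rttPerm_apply, rttPerm_apply]
  simp only [rttDeck]
  rw [List.getElem_append_right hi, List.getElem_append_right hj]
  exact Finset.sortedLT_sort _ (Fin.mk_lt_mk.2 (by rw [Fin.lt_def] at hij; omega))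

theorem rttPerm_comp_apply {n r : ℕ} (σ : Equiv.Perm (Fin n)) (s : Fin r → Fin n) {i : Fin n}
    (hi : (i : ℕ) < distinctCount n r s) : rttPerm n r (σ ∘ s) i = σ (rttPerm n r s i) := by
  have hmap : (List.ofFn (σ ∘ s)).dedup.reverse = (List.ofFn s).dedup.reverse.map σ := by
    rw [← List.map_ofFn, List.dedup_map_of_injective σ.injective, List.map_reverse]
  have hi' : (i : ℕ) < (List.ofFn s).dedup.reverse.length := by
    rwa [List.length_reverse, ← distinctCount_eq_length_dedup]
  rw [rttPerm_apply, rttPerm_apply]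
  simp only [rttDeck]
  rw [List.getElem_append_left (by rw [hmap, List.length_map]; exact hi'),
    List.getElem_append_left hi', List.getElem_of_eq hmap, List.getElem_map]

theorem distinctCount_le {n r : ℕ} (s : Fin r → Fin n) : distinctCount n r s ≤ n := by
  simpa [distinctCount] using card_le_univ (univ.image s)

theorem distinctCount_comp {n r : ℕ} (σ : Equiv.Perm (Fin n)) (s : Fin r → Fin n) :
    distinctCount n r (σ ∘ s) = distinctCount n r s := by
  rw [distinctCount, distinctCount, ← Finset.image_image, card_image_of_injective _ σ.injective]

/-- Relabelling the selected cards by `σ` relabels the top `distinctCount` cards of the deck,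
and the statistic on the right only sees those. -/
theorem fixedPointCount_rttPerm_comp {n r : ℕ} (σ : Equiv.Perm (Fin n)) (s : Fin r → Fin n) :
    fixedPointCount (rttPerm n r (σ ∘ s)) =
      n - maxFirst n (distinctCount n r s) (σ * rttPerm n r s) +
        fixedFirst n (distinctCount n r s) (σ * rttPerm n r s) := by
  have hagree : ∀ i : Fin n, (i : ℕ) < distinctCount n r s →
      rttPerm n r (σ ∘ s) i = (σ * rttPerm n r s) i := fun _ hi => rttPerm_comp_apply σ s hi
  rw [fixedPointCount_eq_of_strictMonoOn (distinctCount_le _) (rttPerm_strictMonoOn _),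
    distinctCount_comp, maxFirst_congr hagree, fixedFirst_congr hagree]

theorem unifProb_congr_equiv {α β : Type*} [Fintype α] [Fintype β] {p : α → Prop}
    {q : β → Prop} (e : α ≃ β) (h : ∀ x, p x ↔ q (e x)) : unifProb p = unifProb q := by
  rw [unifProb, unifProb, Nat.card_congr (e.subtypeEquiv h), Fintype.card_congr e]

theorem unifProb_fst {α β : Type*} [Fintype α] [Fintype β] [Nonempty β] (p : α → Prop) :
    unifProb (fun x : α × β => p x.1) = unifProb p := by
  rw [unifProb, unifProb, Nat.card_congr Equiv.prodSubtypeFstEquivSubtypeProd, Nat.card_prod,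
    Fintype.card_prod, Nat.card_eq_fintype_card (α := β), Nat.cast_mul, Nat.cast_mul,
    mul_div_mul_right _ _ (by positivity)]

theorem rtt_fixedPoints_decomposition_general (n r : ℕ) (m : ℕ) :
    unifProb (fun s : Fin r → Fin n => fixedPointCount (rttPerm n r s) = m) =
      unifProb (fun x : (Fin r → Fin n) × Equiv.Perm (Fin n) =>
        n - maxFirst n (distinctCount n r x.1) x.2 +
          fixedFirst n (distinctCount n r x.1) x.2 = m) := by
  let relabel : (Fin r → Fin n) × Equiv.Perm (Fin n) ≃ (Fin r → Fin n) × Equiv.Perm (Fin n) :=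
    { toFun := fun x => (x.2 ∘ x.1, x.2)
      invFun := fun x => (⇑x.2⁻¹ ∘ x.1, x.2)
      left_inv := fun x => by ext <;> simp
      right_inv := fun x => by ext <;> simp }
  calc unifProb (fun s : Fin r → Fin n => fixedPointCount (rttPerm n r s) = m)
      = unifProb (fun x : (Fin r → Fin n) × Equiv.Perm (Fin n) =>
          fixedPointCount (rttPerm n r x.1) = m) := (unifProb_fst _).symm
    _ = unifProb (fun x : (Fin r → Fin n) × Equiv.Perm (Fin n) =>
          fixedPointCount (rttPerm n r (x.2 ∘ x.1)) = m) :=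
        (unifProb_congr_equiv relabel fun _ => Iff.rfl).symm
    _ = _ := unifProb_congr_equiv
        (Equiv.prodShear (Equiv.refl _) fun s => Equiv.mulRight (rttPerm n r s))
        fun x => by rw [fixedPointCount_rttPerm_comp]; rfl

/-- **Theorem (decomposition of fixed points).** For `n ≥ 1`, `r ≥ 1`, the number of fixed
points after `r` iterated random-to-top shuffles is equal in distribution to
`n - max_{1 ≤ i ≤ K} π(i) + Σ_{i=1}^{K} 1(π(i) = i)`, where `π` is a uniformly random
permutation of `[n]` and `K` is the (independent) number of distinct values among `r`
i.i.d. uniform samples from `[n]` (here the pair `(s, π)` is uniform on the product). -/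
theorem rtt_fixedPoints_decomposition (n r : ℕ) (hn : 1 ≤ n) (hr : 1 ≤ r) (m : ℕ) :
    unifProb (fun s : Fin r → Fin n => fixedPointCount (rttPerm n r s) = m) =
      unifProb (fun x : (Fin r → Fin n) × Equiv.Perm (Fin n) =>
        n - maxFirst n (distinctCount n r x.1) x.2 +
          fixedFirst n (distinctCount n r x.1) x.2 = m) :=
  rtt_fixedPoints_decomposition_general n r m
end

section
/- Let n ≥ 1 and r ≥ 1 be integers and let k ∈ [n]. Let Π^r_n be the random permutation of [n] obtained by performing r iterated random-to-top shuffles starting from the identity, and let W^r_k be the event that Π^r_n(k) = k (card k is in position k after the r shuffles). Let K^r_n be the number of distinct values among r i.i.d. uniform samples from [n]. Then P(W^r_k) = ((k−1)/n)^r + P(K^r_n ≥ k)/n. -/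
open MeasureTheory ProbabilityTheory Filter Finset Topology
open scoped NNReal

/-!
Cards and positions are `0`-indexed, so card `k` is `c = k - 1`. After a move-to-top of `a`,
card `v` lies above card `c` iff `v = a ≠ c`, or `c ≠ a` and `v` lay above `c` before. So after
the shuffles the cards above `c` are the distinct cards selected since the last selection of `c`
or, if `c` was never selected, all selected cards together with the cards originally above `c`.
Hence `c` is back at position `c` iff either all selections are below `c` (`c ^ r` sequences), or
exactly `c` distinct cards were selected after the last selection of `c`. Ranking the `K` distinct
selected values by recency of their last selection shows that exactly one card has exactly `c`
distinct cards selected after it when `c < K`, and none otherwise; summing over all cards and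
using the symmetry between them, `n` times the number of sequences of the second kind is the
number of sequences with `c < K`.
-/

lemma Fin.val_cycleRange {n : ℕ} (p q : Fin n) :
    (p.cycleRange q : ℕ) = if q = p then 0 else if q < p then (q : ℕ) + 1 else q := by
  have : NeZero n := ⟨by have := p.pos; omega⟩
  rcases lt_trichotomy q p with h | rfl | h
  · simp [Fin.coe_cycleRange_of_lt h, h.ne, h]
  · simp
  · simp [Fin.cycleRange_of_gt h, h.ne', not_lt.2 h.le]

lemma Fin.cycleRange_lt_cycleRange_iff {n : ℕ} (p q q' : Fin n) :
    p.cycleRange q < p.cycleRange q' ↔ q' ≠ p ∧ (q = p ∨ q < q') := by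
  rw [Fin.lt_def, Fin.val_cycleRange, Fin.val_cycleRange]
  simp only [Fin.ext_iff, Fin.lt_def]
  split_ifs <;> omega

lemma Equiv.Perm.val_inv_apply_eq_card_filter_lt {n : ℕ} (σ : Equiv.Perm (Fin n)) (c : Fin n) :
    (σ⁻¹ c : ℕ) = #{v | σ⁻¹ v < σ⁻¹ c} := by
  rw [← Fin.card_Iio, ← Finset.card_map σ.toEmbedding]
  congr 1
  ext v
  simp [Equiv.Perm.inv_def]

lemma Finset.card_union_eq_card_right_iff {α : Type*} [DecidableEq α] {s t : Finset α} :
    #(s ∪ t) = #t ↔ s ⊆ t := by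
  refine ⟨fun h => ?_, fun h => by rw [Finset.union_eq_right.2 h]⟩
  exact Finset.union_eq_right.1
    (Finset.eq_of_subset_of_card_le Finset.subset_union_right h.le).symm

namespace List

variable {α : Type*} [DecidableEq α]

def distinctBefore (l : List α) (c : α) : ℕ :=
  (l.takeWhile (· ≠ c)).toFinset.card

lemma takeWhile_ne_subset_of_mem {l : List α} {c c' : α} (h : c' ∈ l.takeWhile (· ≠ c)) :
    l.takeWhile (· ≠ c') ⊆ l.takeWhile (· ≠ c) := by
  induction l with
  | nil => simp
  | cons x l ih =>
    by_cases hxc : x = c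
    · simp [hxc] at h
    by_cases hxc' : x = c'
    · simp [hxc']
    have hc : (x :: l).takeWhile (· ≠ c) = x :: l.takeWhile (· ≠ c) :=
      takeWhile_cons_of_pos (by simpa using hxc)
    have hc' : (x :: l).takeWhile (· ≠ c') = x :: l.takeWhile (· ≠ c') :=
      takeWhile_cons_of_pos (by simpa using hxc')
    rw [hc] at h
    rw [hc, hc']
    exact cons_subset_cons x (ih ((mem_cons.1 h).resolve_left (Ne.symm hxc')))

lemma mem_takeWhile_ne_or_mem_takeWhile_ne {l : List α} {c c' : α} (hc : c ∈ l) (hc' : c' ∈ l)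
    (h : c ≠ c') : c' ∈ l.takeWhile (· ≠ c) ∨ c ∈ l.takeWhile (· ≠ c') := by
  induction l with
  | nil => simp at hc
  | cons x l ih =>
    by_cases hxc : x = c
    · subst hxc; simp [h]
    by_cases hxc' : x = c'
    · subst hxc'; simp [Ne.symm h]
    have e : (x :: l).takeWhile (· ≠ c) = x :: l.takeWhile (· ≠ c) :=
      takeWhile_cons_of_pos (by simpa using hxc)
    have e' : (x :: l).takeWhile (· ≠ c') = x :: l.takeWhile (· ≠ c') :=
      takeWhile_cons_of_pos (by simpa using hxc')
    rw [e, e']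
    exact (ih ((mem_cons.1 hc).resolve_left (Ne.symm hxc))
      ((mem_cons.1 hc').resolve_left (Ne.symm hxc'))).imp (mem_cons_of_mem x) (mem_cons_of_mem x)

lemma distinctBefore_lt_of_mem_takeWhile {l : List α} {c c' : α}
    (h : c' ∈ l.takeWhile (· ≠ c)) : l.distinctBefore c' < l.distinctBefore c := by
  refine Finset.card_lt_card ((Finset.ssubset_iff_of_subset ?_).2 ⟨c', ?_, ?_⟩)
  · exact Multiset.toFinset_subset.2 (takeWhile_ne_subset_of_mem h)
  · simpa using h
  · simpa using fun h' => by simpa using mem_takeWhile_imp h'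

lemma injOn_distinctBefore (l : List α) : Set.InjOn l.distinctBefore {c | c ∈ l} := by
  intro c hc c' hc' h
  by_contra hne
  rcases mem_takeWhile_ne_or_mem_takeWhile_ne hc hc' hne with h' | h'
  · exact (distinctBefore_lt_of_mem_takeWhile h').ne h.symm
  · exact (distinctBefore_lt_of_mem_takeWhile h').ne h

lemma distinctBefore_lt_card {l : List α} {c : α} (hc : c ∈ l) :
    l.distinctBefore c < l.toFinset.card := by
  refine Finset.card_lt_card ((Finset.ssubset_iff_of_subset ?_).2 ⟨c, by simpa using hc, ?_⟩)
  · exact Multiset.toFinset_subset.2 (List.takeWhile_subset _)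
  · simpa using fun h' => by simpa using mem_takeWhile_imp h'

lemma image_distinctBefore (l : List α) :
    l.toFinset.image l.distinctBefore = Finset.range l.toFinset.card := by
  refine Finset.eq_of_subset_of_card_le (fun j hj => ?_) ?_
  · obtain ⟨c, hc, rfl⟩ := Finset.mem_image.1 hj
    exact Finset.mem_range.2 (distinctBefore_lt_card (List.mem_toFinset.1 hc))
  · rw [Finset.card_range, Finset.card_image_of_injOn]
    simpa using l.injOn_distinctBefore

lemma card_filter_distinctBefore_eq (l : List α) (j : ℕ) :
    #{c ∈ l.toFinset | l.distinctBefore c = j} = if j < l.toFinset.card then 1 else 0 := by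
  calc #{c ∈ l.toFinset | l.distinctBefore c = j}
      = #((l.toFinset.image l.distinctBefore).filter (· = j)) := by
        rw [Finset.filter_image, Finset.card_image_of_injOn]
        exact l.injOn_distinctBefore.mono fun c hc => by simp_all
    _ = if j < l.toFinset.card then 1 else 0 := by
        rw [image_distinctBefore, Finset.filter_eq']
        split_ifs <;> simp_all

lemma distinctBefore_map {β : Type*} [DecidableEq β] {f : α → β} (hf : Function.Injective f)
    (l : List α) (c : α) : (l.map f).distinctBefore (f c) = l.distinctBefore c := by
  have hp : ((fun x => decide (x ≠ f c)) ∘ f) = fun x => decide (x ≠ c) := by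
    funext x; simp [hf.eq_iff]
  have himage :
      ((l.takeWhile (· ≠ c)).map f).toFinset = (l.takeWhile (· ≠ c)).toFinset.image f := by
    ext; simp
  rw [distinctBefore, takeWhile_map, hp, himage, Finset.card_image_of_injective _ hf,
    distinctBefore]

lemma toFinset_ofFn {r : ℕ} (s : Fin r → α) : (ofFn s).toFinset = univ.image s := by
  ext; simp

end List

lemma moveToTop_inv_lt_iff {n : ℕ} (a : Fin n) (π : Equiv.Perm (Fin n)) (v c : Fin n) :
    (moveToTop a π)⁻¹ v < (moveToTop a π)⁻¹ c ↔ c ≠ a ∧ (v = a ∨ π⁻¹ v < π⁻¹ c) := by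
  simp [moveToTop, mul_inv_rev, Equiv.Perm.mul_apply, Fin.cycleRange_lt_cycleRange_iff]

lemma foldl_moveToTop_inv_lt_iff {n : ℕ} (l : List (Fin n)) (π : Equiv.Perm (Fin n))
    (v c : Fin n) :
    (l.foldl (fun π a => moveToTop a π) π)⁻¹ v < (l.foldl (fun π a => moveToTop a π) π)⁻¹ c ↔
      v ∈ l.reverse.takeWhile (· ≠ c) ∨ (c ∉ l ∧ π⁻¹ v < π⁻¹ c) := by
  induction l using List.reverseRecOn with
  | nil => simp
  | append_singleton l a ih =>
    rw [List.foldl_concat, moveToTop_inv_lt_iff, ih]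
    by_cases hca : c = a
    · simp [hca]
    · simp [hca, Ne.symm hca, or_assoc]

lemma foldl_moveToTop_apply_eq_self_iff {n : ℕ} (l : List (Fin n)) (c : Fin n) :
    l.foldl (fun π a => moveToTop a π) 1 c = c ↔
      (∀ x ∈ l, x < c) ∨ (c ∈ l ∧ l.reverse.distinctBefore c = c) := by
  set π := l.foldl (fun π a => moveToTop a π) 1
  have hpos : π c = c ↔ #{v | v ∈ l.reverse.takeWhile (· ≠ c) ∨ (c ∉ l ∧ v < c)} = c := by
    rw [eq_comm, ← Equiv.Perm.inv_eq_iff_eq, Fin.ext_iff, π.val_inv_apply_eq_card_filter_lt]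
    simp only [π, foldl_moveToTop_inv_lt_iff, inv_one, Equiv.Perm.one_apply]
  rw [hpos]
  by_cases hc : c ∈ l
  · have hnot_lt : ¬ ∀ x ∈ l, x < c := fun h => lt_irrefl c (h c hc)
    simp only [hc, not_true_eq_false, false_and, or_false, hnot_lt, true_and, false_or,
      List.distinctBefore]
    congr! 2
    ext v
    simp
  · have htw : l.reverse.takeWhile (· ≠ c) = l.reverse :=
      List.takeWhile_eq_self_iff.2 fun x hx => by
        simpa using ne_of_mem_of_not_mem (List.mem_reverse.1 hx) hc
    have hset : ({v | v ∈ l.reverse.takeWhile (· ≠ c) ∨ (c ∉ l ∧ v < c)} : Finset (Fin n)) =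
        l.toFinset ∪ Iio c := by
      ext v
      rw [Finset.mem_filter, htw]
      simp [hc]
    rw [hset, ← Fin.card_Iio c, Finset.card_union_eq_card_right_iff]
    simp [hc, Finset.subset_iff]

lemma rttPerm_apply_eq_self_iff {n r : ℕ} (s : Fin r → Fin n) (c : Fin n) :
    rttPerm n r s c = c ↔
      (∀ x ∈ List.ofFn s, x < c) ∨
        (c ∈ List.ofFn s ∧ (List.ofFn s).reverse.distinctBefore c = c) :=
  foldl_moveToTop_apply_eq_self_iff (List.ofFn s) c

section Occupancy

variable {α : Type*} [Fintype α] [DecidableEq α] {r : ℕ}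

lemma card_filter_distinctBefore_perm (σ : Equiv.Perm α) (c : α) (j : ℕ) :
    #{s : Fin r → α | σ c ∈ List.ofFn s ∧ (List.ofFn s).reverse.distinctBefore (σ c) = j} =
      #{s : Fin r → α | c ∈ List.ofFn s ∧ (List.ofFn s).reverse.distinctBefore c = j} := by
  symm
  refine Finset.card_equiv (Equiv.piCongrRight fun _ => σ) fun s => ?_
  have hs : List.ofFn ((Equiv.piCongrRight fun _ => σ) s) = (List.ofFn s).map σ :=
    (List.map_ofFn (f := s) (g := σ)).symm
  simp only [Finset.mem_filter, Finset.mem_univ, true_and, hs,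
    List.mem_map_of_injective σ.injective, ← List.map_reverse,
    List.distinctBefore_map σ.injective]

lemma card_mul_card_filter_distinctBefore (c : α) (j : ℕ) :
    Fintype.card α *
        #{s : Fin r → α | c ∈ List.ofFn s ∧ (List.ofFn s).reverse.distinctBefore c = j} =
      #{s : Fin r → α | j < #(univ.image s)} := by
  calc Fintype.card α *
        #{s : Fin r → α | c ∈ List.ofFn s ∧ (List.ofFn s).reverse.distinctBefore c = j}
      = ∑ c',
          #{s : Fin r → α | c' ∈ List.ofFn s ∧ (List.ofFn s).reverse.distinctBefore c' = j} := by
        rw [← Finset.card_univ, ← smul_eq_mul, ← Finset.sum_const]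
        refine Finset.sum_congr rfl fun c' _ => ?_
        simpa using (card_filter_distinctBefore_perm (Equiv.swap c c') c j).symm
    _ = ∑ s : Fin r → α,
          #{c' | c' ∈ List.ofFn s ∧ (List.ofFn s).reverse.distinctBefore c' = j} := by
        simp only [Finset.card_filter]
        exact Finset.sum_comm
    _ = ∑ s : Fin r → α, if j < #(univ.image s) then 1 else 0 := by
        refine Finset.sum_congr rfl fun s _ => ?_
        rw [← List.toFinset_ofFn, ← List.toFinset_reverse,
          ← List.card_filter_distinctBefore_eq]
        congr 1
        ext; simp
    _ = #{s : Fin r → α | j < #(univ.image s)} := (Finset.card_filter _ _).symm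

end Occupancy

lemma card_filter_forall_lt {n r : ℕ} (c : Fin n) :
    #{s : Fin r → Fin n | ∀ x ∈ List.ofFn s, x < c} = (c : ℕ) ^ r := by
  have h : ({s : Fin r → Fin n | ∀ x ∈ List.ofFn s, x < c} : Finset _) =
      Fintype.piFinset fun _ => Iio c := by
    ext s; simp
  rw [h, Fintype.card_piFinset, Finset.prod_const, Finset.card_univ, Fintype.card_fin,
    Fin.card_Iio]

lemma card_mul_card_filter_rttPerm_apply_eq_self {n r : ℕ} (c : Fin n) :
    n * #{s : Fin r → Fin n | rttPerm n r s c = c} =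
      n * (c : ℕ) ^ r + #{s : Fin r → Fin n | (c : ℕ) < distinctCount n r s} := by
  have hdisj : Disjoint ({s : Fin r → Fin n | ∀ x ∈ List.ofFn s, x < c} : Finset _)
      ({s | c ∈ List.ofFn s ∧ (List.ofFn s).reverse.distinctBefore c = c} : Finset _) :=
    Finset.disjoint_filter.2 fun s _ hlt hc => lt_irrefl c (hlt c hc.1)
  have hsplit : #{s : Fin r → Fin n | rttPerm n r s c = c} = (c : ℕ) ^ r +
      #{s : Fin r → Fin n | c ∈ List.ofFn s ∧ (List.ofFn s).reverse.distinctBefore c = c} := by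
    rw [Finset.filter_congr fun s _ => rttPerm_apply_eq_self_iff s c,
      Finset.filter_or, Finset.card_union_of_disjoint hdisj, card_filter_forall_lt]
  have hselected := card_mul_card_filter_distinctBefore (r := r) c (c : ℕ)
  rw [Fintype.card_fin] at hselected
  rw [hsplit, mul_add, hselected]
  rfl

lemma unifProb_eq_card_filter {α : Type*} [Fintype α] (p : α → Prop) [DecidablePred p] :
    unifProb p = (#{x | p x} : ℝ) / Fintype.card α := by
  rw [unifProb, Nat.card_eq_fintype_card, Fintype.card_subtype]

/-- **Proposition (return probability).** For `1 ≤ k ≤ n`, the probability that card `k`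
is in position `k` after `r` iterated random-to-top shuffles equals
`((k-1)/n)^r + P(K ≥ k)/n`, where `K` is the number of distinct values among `r` i.i.d.
uniform samples from `[n]` (positions and cards are `0`-indexed by `Fin n`, so card `k`
corresponds to `⟨k - 1, _⟩`). -/
theorem rtt_return_probability (n r : ℕ) (k : ℕ) (hk : 1 ≤ k)
    (hkn : k ≤ n) :
    unifProb (fun s : Fin r → Fin n =>
        rttPerm n r s ⟨k - 1, by omega⟩ = ⟨k - 1, by omega⟩) =
      (((k : ℝ) - 1) / n) ^ r +
        unifProb (fun s : Fin r → Fin n => k ≤ distinctCount n r s) / n := by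
  have hcount :=
    card_mul_card_filter_rttPerm_apply_eq_self (r := r) (⟨k - 1, by omega⟩ : Fin n)
  have hK : ∀ s, k - 1 < distinctCount n r s ↔ k ≤ distinctCount n r s := fun s => by omega
  simp only [hK] at hcount
  have hcountℝ := congrArg (Nat.cast : ℕ → ℝ) hcount
  push_cast [Nat.cast_sub hk] at hcountℝ
  have hn : (n : ℝ) ≠ 0 := by norm_cast; omega
  rw [unifProb_eq_card_filter, unifProb_eq_card_filter, Fintype.card_fun, Fintype.card_fin,
    Fintype.card_fin, Nat.cast_pow, div_pow]
  field_simp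
  linear_combination hcountℝ
end

section
/- Let n ≥ 2 and r ≥ 1 be integers, and let F^r_n be the number of fixed points of the random permutation of [n] obtained by performing r iterated random-to-top shuffles starting from the identity. Then E[F^r_n] = 1 + Σ_{k=0}^{n−2} (k/n)^r. -/
open MeasureTheory ProbabilityTheory Filter Finset Topology
open scoped NNReal

/-!
If the deck is `π` and card `x` is moved to the top, the card at position `p` moves to position
`(π⁻¹ x).cycleRange p`. As `π⁻¹ x` is uniform, the position of a fixed card is a Markov chain
that jumps to `0` with probability `1/n`, stays at `p` with probability `p/n` and otherwise moves
to `p + 1`. Let `N r c j` (`rttPosCount`) count the selection sequences that leave card `c` at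
position `j`. A card can only get above its starting position through a jump to `0`, so
`N r c j` does not depend on `c` for `j < c`, while `N r c c = c ^ r + N r c' c` for `c < c'`:
the extra `c ^ r` sequences select only cards `k < c`, which never move card `c`. Taking for
`c'` the bottom card,
`∑ c, N r c c = ∑_{k < n - 1} k ^ r + ∑ j, N r c' j = ∑_{k < n - 1} k ^ r + n ^ r`.
-/

variable {n : ℕ}

lemma rttPerm_snoc (r : ℕ) (s : Fin r → Fin n) (c : Fin n) :
    rttPerm n (r + 1) (Fin.snoc s c) = moveToTop c (rttPerm n r s) := by
  rw [rttPerm, List.ofFn_succ', List.concat_eq_append, List.foldl_append]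
  simp [rttPerm]

lemma moveToTop_inv_apply (c : Fin n) (π : Equiv.Perm (Fin n)) (i : Fin n) :
    (moveToTop c π)⁻¹ i = (π⁻¹ c).cycleRange (π⁻¹ i) := by
  simp [moveToTop, Equiv.Perm.mul_apply]

lemma Fin.sum_cycleRange_apply {M : Type*} [AddCommMonoid M] (p : Fin n) (g : ℕ → M) :
    ∑ q : Fin n, g (q.cycleRange p) = g 0 + (p : ℕ) • g p + (n - 1 - p) • g (p + 1) := by
  have : NeZero n := ⟨p.pos.ne'⟩
  have hsplit : (univ : Finset (Fin n)) = Iio p ∪ {p} ∪ Ioi p := by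
    ext q
    simp only [mem_univ, mem_union, mem_Iio, mem_singleton, mem_Ioi, true_iff]
    exact or_assoc.2 (lt_trichotomy q p)
  have below : ∑ q ∈ Iio p, g (q.cycleRange p) = ∑ q ∈ Iio p, g p :=
    sum_congr rfl fun q hq => by rw [Fin.cycleRange_of_gt (mem_Iio.1 hq)]
  have above : ∑ q ∈ Ioi p, g (q.cycleRange p) = ∑ q ∈ Ioi p, g (p + 1) :=
    sum_congr rfl fun q hq => by rw [Fin.coe_cycleRange_of_lt (mem_Ioi.1 hq)]
  rw [hsplit, sum_union, sum_union, sum_singleton, Fin.cycleRange_self, below, above,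
    Finset.sum_const, Finset.sum_const, Fin.card_Iio, Fin.card_Ioi, Fin.val_zero]
  · abel
  all_goals simp +contextual [Finset.disjoint_left, ne_of_lt]

lemma sum_rttPerm_succ_inv_apply {M : Type*} [AddCommMonoid M] (r : ℕ) (c : Fin n)
    (g : ℕ → M) :
    ∑ s : Fin (r + 1) → Fin n, g ((rttPerm n (r + 1) s)⁻¹ c) =
      ∑ s : Fin r → Fin n, (g 0 + ((rttPerm n r s)⁻¹ c : ℕ) • g ((rttPerm n r s)⁻¹ c) +
        (n - 1 - (rttPerm n r s)⁻¹ c) • g ((rttPerm n r s)⁻¹ c + 1)) := by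
  rw [← (Fin.snocEquiv fun _ => Fin n).sum_comp, Fintype.sum_prod_type_right]
  refine sum_congr rfl fun s _ => ?_
  have hsnoc (x : Fin n) : Fin.snocEquiv (fun _ => Fin n) (x, s) = Fin.snoc s x := rfl
  simp only [hsnoc, rttPerm_snoc, moveToTop_inv_apply]
  rw [← Fin.sum_cycleRange_apply]
  exact Equiv.sum_comp (rttPerm n r s)⁻¹ fun q => g (q.cycleRange ((rttPerm n r s)⁻¹ c))

def rttPosCount (n r : ℕ) (c : Fin n) (j : ℕ) : ℕ :=
  #{s : Fin r → Fin n | ((rttPerm n r s)⁻¹ c : ℕ) = j}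

lemma rttPosCount_eq_sum (r : ℕ) (c : Fin n) (j : ℕ) :
    rttPosCount n r c j = ∑ s : Fin r → Fin n, if ((rttPerm n r s)⁻¹ c : ℕ) = j then 1 else 0 :=
  card_filter _ _

lemma rttPosCount_zero (c : Fin n) (j : ℕ) :
    rttPosCount n 0 c j = if (c : ℕ) = j then 1 else 0 := by
  simp [rttPosCount_eq_sum, rttPerm]

lemma rttPosCount_succ_zero (r : ℕ) (c : Fin n) : rttPosCount n (r + 1) c 0 = n ^ r := by
  rw [rttPosCount_eq_sum, sum_rttPerm_succ_inv_apply r c fun p => if p = 0 then 1 else 0]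
  trans ∑ _s : Fin r → Fin n, 1
  · exact sum_congr rfl fun s _ => by split_ifs <;> simp_all
  · simp

lemma rttPosCount_succ_succ (r : ℕ) (c : Fin n) (j : ℕ) :
    rttPosCount n (r + 1) c (j + 1) =
      (j + 1) * rttPosCount n r c (j + 1) + (n - 1 - j) * rttPosCount n r c j := by
  rw [rttPosCount_eq_sum, sum_rttPerm_succ_inv_apply r c fun p => if p = j + 1 then 1 else 0,
    rttPosCount_eq_sum, rttPosCount_eq_sum, mul_sum, mul_sum, ← sum_add_distrib]
  refine sum_congr rfl fun s _ => ?_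
  split_ifs <;> simp_all

lemma sum_rttPosCount (r : ℕ) (c : Fin n) : ∑ j ∈ range n, rttPosCount n r c j = n ^ r := by
  have : n ^ r = #(univ : Finset (Fin r → Fin n)) := by simp
  rw [this, card_eq_sum_card_fiberwise fun s _ => mem_range.2 ((rttPerm n r s)⁻¹ c).isLt]
  rfl

lemma rttPosCount_eq_of_lt (r : ℕ) {c c' : Fin n} {j : ℕ} (hc : j < c) (hc' : j < c') :
    rttPosCount n r c j = rttPosCount n r c' j := by
  induction r generalizing j with
  | zero => rw [rttPosCount_zero, rttPosCount_zero, if_neg hc.ne', if_neg hc'.ne']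
  | succ r ih =>
    cases j with
    | zero => rw [rttPosCount_succ_zero, rttPosCount_succ_zero]
    | succ j =>
      rw [rttPosCount_succ_succ, rttPosCount_succ_succ, ih hc hc', ih (by omega) (by omega)]

lemma rttPosCount_self (r : ℕ) {c c' : Fin n} (h : c < c') :
    rttPosCount n r c c = (c : ℕ) ^ r + rttPosCount n r c' c := by
  induction r with
  | zero => simp [rttPosCount_zero, Fin.val_ne_of_ne h.ne']
  | succ r ih =>
    rcases hc : (c : ℕ) with _ | j
    · simp [rttPosCount_succ_zero]
    · rw [hc] at ih
      have hj : j < c := by omega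
      rw [rttPosCount_succ_succ, rttPosCount_succ_succ, ih,
        rttPosCount_eq_of_lt r hj (hj.trans h)]
      ring

lemma sum_fixedPointCount_rttPerm (r : ℕ) :
    ∑ s : Fin r → Fin n, fixedPointCount (rttPerm n r s) = ∑ c : Fin n, rttPosCount n r c c := by
  simp only [fixedPointCount, rttPosCount, card_filter]
  rw [sum_comm]
  refine sum_congr rfl fun c _ => sum_congr rfl fun s _ => ?_
  simp only [Fin.val_inj, Equiv.Perm.inv_eq_iff_eq, eq_comm (a := c)]

lemma sum_fixedPointCount_rttPerm_eq (m r : ℕ) :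
    ∑ s : Fin r → Fin (m + 1), fixedPointCount (rttPerm (m + 1) r s) =
      ∑ k ∈ range m, k ^ r + (m + 1) ^ r := by
  rw [sum_fixedPointCount_rttPerm, Fin.sum_univ_castSucc]
  simp only [rttPosCount_self r (Fin.castSucc_lt_last _), sum_add_distrib, add_assoc]
  rw [← sum_rttPosCount r (Fin.last m), sum_range_succ, ← Fin.sum_univ_eq_sum_range (· ^ r),
    ← Fin.sum_univ_eq_sum_range (rttPosCount (m + 1) r (Fin.last m))]
  simp

theorem rtt_expected_fixedPoints_general (n r : ℕ) (hn : 2 ≤ n) :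
    unifExpect (fun s : Fin r → Fin n => (fixedPointCount (rttPerm n r s) : ℝ)) =
      1 + ∑ k ∈ Finset.range (n - 1), ((k : ℝ) / n) ^ r := by
  obtain ⟨m, rfl⟩ : ∃ m, n = m + 1 := ⟨n - 1, by omega⟩
  rw [unifExpect, ← Nat.cast_sum, sum_fixedPointCount_rttPerm_eq, Fintype.card_fun,
    Fintype.card_fin, Fintype.card_fin, Nat.add_sub_cancel]
  simp only [div_pow, ← sum_div]
  push_cast
  field_simp
  ring

/-- **(Pehlivan's formula.)** For `n ≥ 2` and `r ≥ 1`, the expected number of fixed points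
after `r` iterated random-to-top shuffles is `1 + Σ_{k=0}^{n-2} (k/n)^r`. -/
theorem rtt_expected_fixedPoints (n r : ℕ) (hn : 2 ≤ n) (hr : 1 ≤ r) :
    unifExpect (fun s : Fin r → Fin n => (fixedPointCount (rttPerm n r s) : ℝ)) =
      1 + ∑ k ∈ Finset.range (n - 1), ((k : ℝ) / n) ^ r :=
  rtt_expected_fixedPoints_general n r hn
end
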